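/- Let n ≥ 1, let L be a finite set, let ρ be a permutation of [n] ∪ L, and let 0 ≤ i ≤ j ≤ n be such that for every k ∈ {i, i+1, …, j} one has ρ(k) ∈ L and ρ(ρ(k)) = k. Then all the corresponding faces agree in the set of Symm(L)-conjugacy orbits: the classes of D_i(ρ), D_{i+1}(ρ), …, D_j(ρ) in Tymm([n−1] ∪ L) all coincide. (This is the key step showing that all faces taken along a fan of a parametrized unenumerated Sullivan diagram coincide.) -/

import Mathlib

/-- `Option α ⊕ β ≃ Option (α ⊕ β)`, sending `inl none` to `none`. -/
def optionSumEquiv (α β : Type*) : (Option α ⊕ β) ≃ Option (α ⊕ β) where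
  toFun x :=
    match x with
    | Sum.inl (some a) => some (Sum.inl a)
    | Sum.inl none => none
    | Sum.inr b => some (Sum.inr b)
  invFun x :=
    match x with
    | some (Sum.inl a) => Sum.inl (some a)
    | some (Sum.inr b) => Sum.inr b
    | none => Sum.inl none
  left_inv x := by rcases x with (_ | a) | b <;> rfl
  right_inv x := by rcases x with _ | (a | b) <;> rfl

/-- The identification of `[n] ∪ L` with `Option ([n-1] ∪ L)` sending `i` to `none`:
away from `i` it is the order-preserving renormalization `[n] \ {i} → [n-1]`
(the inverse of `d_i`, i.e. the map `s_i` restricted to `[n] \ {i}`), and the identity on `L`. -/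
def faceEquiv (n : ℕ) (L : Type*) (i : Fin (n + 1)) :
    (Fin (n + 1) ⊕ L) ≃ Option (Fin n ⊕ L) :=
  ((finSuccEquiv' i).sumCongr (Equiv.refl L)).trans (optionSumEquiv (Fin n) L)

/-- The `i`-th face map `D_i : Symm([n] ∪ L) → Symm([n-1] ∪ L)`, given by
`D_i(α) = s_i ∘ α ∘ (i α⁻¹(i)) ∘ d_i`, i.e. removing the symbol `i` from the cycle
decomposition of `α` and renormalizing the remaining elements of `[n]`. -/
def faceMap {n : ℕ} {L : Type*} (i : Fin (n + 1)) (α : Equiv.Perm (Fin (n + 1) ⊕ L)) :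
    Equiv.Perm (Fin n ⊕ L) :=
  Equiv.removeNone (((faceEquiv n L i).symm.trans α).trans (faceEquiv n L i))


/-- The extension of a permutation `σ` of `L` to a permutation of `[n] ∪ L`
(here `Fin n ⊕ L`) which is the identity on `[n]`. -/
def extendPerm (n : ℕ) {L : Type*} (σ : Equiv.Perm L) : Equiv.Perm (Fin n ⊕ L) :=
  Equiv.sumCongr (Equiv.refl (Fin n)) σ

/-! Deleting the symbol `k + 1` instead of `k` amounts to conjugating `ρ` by the transposition
`(k k+1)` before taking the `k`-th face. When `ρ` matches `k` and `k + 1` with leaves `l` and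
`l'`, this conjugate equals the conjugate of `ρ` by the transposition `(l l')`, and taking a face
commutes with conjugation by permutations of `L`. Induction on `k` from `i` then gives the claim. -/

open Equiv

theorem Fin.succ_succAbove_of_ne {n : ℕ} {i m : Fin n} (h : m ≠ i) :
    i.succ.succAbove m = i.castSucc.succAbove m := by
  rcases lt_or_gt_of_ne h with h | h
  · rw [Fin.succAbove_of_castSucc_lt, Fin.succAbove_of_castSucc_lt] <;>
      simp only [Fin.lt_def, Fin.val_castSucc, Fin.val_succ] at * <;> omega
  · rw [Fin.succAbove_of_le_castSucc, Fin.succAbove_of_le_castSucc] <;>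
      simp only [Fin.lt_def, Fin.le_def, Fin.val_castSucc, Fin.val_succ] at * <;> omega

theorem removeNone_conj_optionCongr {α : Type*} (f : Perm α) (g : Perm (Option α)) :
    removeNone (f.optionCongr⁻¹ * g * f.optionCongr) = f⁻¹ * removeNone g * f := by
  ext x
  apply Option.some_injective
  rcases h : g (some (f x)) with _ | y
  · rw [removeNone_none _ (by simp [h])]
    have := removeNone_none g h
    simp_all [← optionCongr_symm]
  · rw [removeNone_some _ ⟨f.symm y, by simp [← optionCongr_symm, h]⟩]
    have := removeNone_some g ⟨y, h⟩
    simp_all [← optionCongr_symm]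

theorem swap_inl_conj_eq_swap_inr_conj {α β : Type*} [DecidableEq α] [DecidableEq β]
    (ρ : Perm (α ⊕ β)) {a b : α} {c d : β}
    (hac : ρ (Sum.inl a) = Sum.inr c) (hca : ρ (Sum.inr c) = Sum.inl a)
    (hbd : ρ (Sum.inl b) = Sum.inr d) (hdb : ρ (Sum.inr d) = Sum.inl b) :
    swap (Sum.inl a) (Sum.inl b) * ρ * swap (Sum.inl a) (Sum.inl b) =
      swap (Sum.inr c) (Sum.inr d) * ρ * swap (Sum.inr c) (Sum.inr d) := by
  have hsρ :=
    eq_mul_inv_iff_mul_eq.mp (hca ▸ hdb ▸ swap_apply_apply ρ (Sum.inr c) (Sum.inr d))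
  have hρs :=
    eq_mul_inv_iff_mul_eq.mp (hac ▸ hbd ▸ swap_apply_apply ρ (Sum.inl a) (Sum.inl b))
  have hst : swap (Sum.inr c) (Sum.inr d) * swap (Sum.inl a) (Sum.inl b) =
      swap (Sum.inl a) (Sum.inl b) * (swap (Sum.inr c) (Sum.inr d) : Perm (α ⊕ β)) := by
    simp only [← Perm.sumCongr_swap_refl, ← Perm.sumCongr_refl_swap, Perm.sumCongr_mul]
    rfl
  calc _ = ρ * (swap (Sum.inr c) (Sum.inr d) * swap (Sum.inl a) (Sum.inl b)) := by
        rw [hsρ, mul_assoc]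
    _ = _ := by rw [hst, ← mul_assoc, ← hρs]

section

variable {n : ℕ} {L : Type*}

theorem faceEquiv_symm_none (i : Fin (n + 1)) : (faceEquiv n L i).symm none = Sum.inl i := by
  simp [faceEquiv, optionSumEquiv]

theorem faceEquiv_symm_some_inl (i : Fin (n + 1)) (m : Fin n) :
    (faceEquiv n L i).symm (some (Sum.inl m)) = Sum.inl (i.succAbove m) := by
  simp [faceEquiv, optionSumEquiv, finSuccEquiv'_symm_some]

theorem faceEquiv_symm_some_inr (i : Fin (n + 1)) (t : L) :
    (faceEquiv n L i).symm (some (Sum.inr t)) = Sum.inr t := by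
  simp [faceEquiv, optionSumEquiv]

theorem faceEquiv_succ [DecidableEq L] (i : Fin n) :
    faceEquiv n L i.succ =
      (swap (Sum.inl i.castSucc) (Sum.inl i.succ)).trans (faceEquiv n L i.castSucc) := by
  apply Equiv.symm_bijective.injective
  ext (_ | (m | t)) : 1
  · simp [faceEquiv_symm_none]
  · simp only [faceEquiv_symm_some_inl, symm_trans_apply, symm_swap]
    by_cases hm : m = i
    · subst hm; simp
    · have hne : i.castSucc.succAbove m ≠ i.succ :=
        Fin.succ_succAbove_of_ne hm ▸ Fin.succAbove_ne _ _
      rw [Fin.succ_succAbove_of_ne hm, swap_apply_of_ne_of_ne] <;> simp [Fin.succAbove_ne, hne]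
  · simp [faceEquiv_symm_some_inr, swap_apply_of_ne_of_ne]

theorem faceMap_succ [DecidableEq L] (i : Fin n) (ρ : Perm (Fin (n + 1) ⊕ L)) :
    faceMap i.succ ρ = faceMap i.castSucc (swap (Sum.inl i.castSucc) (Sum.inl i.succ) * ρ *
      swap (Sum.inl i.castSucc) (Sum.inl i.succ)) := by
  unfold faceMap
  rw [faceEquiv_succ]
  congr 1

theorem faceEquiv_extendPerm (i : Fin (n + 1)) (σ : Perm L) (x : Fin (n + 1) ⊕ L) :
    faceEquiv n L i (extendPerm (n + 1) σ x) =
      (extendPerm n σ).optionCongr (faceEquiv n L i x) := by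
  rcases x with m | t
  · obtain ⟨_ | m, rfl⟩ := (finSuccEquiv' i).symm.surjective m <;>
      simp [faceEquiv, optionSumEquiv, extendPerm]
  · rfl

theorem faceMap_conj_extendPerm (i : Fin (n + 1)) (ρ : Perm (Fin (n + 1) ⊕ L)) (σ : Perm L) :
    faceMap i ((extendPerm (n + 1) σ)⁻¹ * ρ * extendPerm (n + 1) σ) =
      (extendPerm n σ)⁻¹ * faceMap i ρ * extendPerm n σ := by
  have h_symm (x) : extendPerm (n + 1) σ ((faceEquiv n L i).symm x) =
      (faceEquiv n L i).symm ((extendPerm n σ).optionCongr x) :=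
    (faceEquiv n L i).injective (by rw [faceEquiv_extendPerm, apply_symm_apply, apply_symm_apply])
  have h_inv (z) : faceEquiv n L i ((extendPerm (n + 1) σ)⁻¹ z) =
      ((extendPerm n σ).optionCongr)⁻¹ (faceEquiv n L i z) :=
    (extendPerm n σ).optionCongr.injective (by rw [← faceEquiv_extendPerm]; simp)
  unfold faceMap
  rw [← removeNone_conj_optionCongr]
  congr 1
  ext x : 1
  simp only [Perm.mul_apply, trans_apply]
  rw [h_symm, h_inv]

theorem extendPerm_swap [DecidableEq L] (l l' : L) :
    extendPerm n (swap l l') = swap (Sum.inr l) (Sum.inr l') :=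
  Perm.sumCongr_refl_swap l l'

theorem extendPerm_one : extendPerm n (1 : Perm L) = 1 :=
  Perm.sumCongr_one

theorem extendPerm_mul (σ τ : Perm L) :
    extendPerm n (σ * τ) = extendPerm n σ * extendPerm n τ :=
  (Perm.sumCongr_mul 1 σ 1 τ).symm

theorem faceMap_succ_eq_conj_swap [DecidableEq L] (i : Fin n) (ρ : Perm (Fin (n + 1) ⊕ L))
    {l l' : L} (hl : ρ (Sum.inl i.castSucc) = Sum.inr l)
    (hl_inv : ρ (Sum.inr l) = Sum.inl i.castSucc)
    (hl' : ρ (Sum.inl i.succ) = Sum.inr l') (hl'_inv : ρ (Sum.inr l') = Sum.inl i.succ) :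
    faceMap i.succ ρ =
      (extendPerm n (swap l l'))⁻¹ * faceMap i.castSucc ρ * extendPerm n (swap l l') := by
  rw [faceMap_succ, swap_inl_conj_eq_swap_inr_conj ρ hl hl_inv hl' hl'_inv,
    ← faceMap_conj_extendPerm, extendPerm_swap, swap_inv]

end

/-- For `n ≥ 1` (here `[n]` is realized as `Fin (n+2)` with `n ↦ n+1`),
a finite set `L`, a permutation `ρ` of `[n] ∪ L`, and `0 ≤ i ≤ j ≤ n` such that for every
`k ∈ {i, …, j}` one has `ρ(k) ∈ L` and `ρ(ρ(k)) = k`, all the faces `D_i(ρ), …, D_j(ρ)`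
agree in the set `Tymm([n-1] ∪ L)` of `Symm(L)`-conjugacy orbits, i.e. each `D_k(ρ)` is
conjugate to `D_i(ρ)` by a permutation of `L` extended by the identity. -/
theorem stmt_5 {L : Type} (n : ℕ) (ρ : Equiv.Perm (Fin (n + 2) ⊕ L))
    (i j : ℕ) (hj : j ≤ n + 1)
    (hleaf : ∀ (k : ℕ) (hik : i ≤ k) (hkj : k ≤ j),
      (∃ l : L, ρ (Sum.inl (⟨k, by omega⟩ : Fin (n + 2))) = Sum.inr l) ∧
        ρ (ρ (Sum.inl (⟨k, by omega⟩ : Fin (n + 2)))) =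
          Sum.inl (⟨k, by omega⟩ : Fin (n + 2))) :
    ∀ (k : ℕ) (hik : i ≤ k) (hkj : k ≤ j),
      ∃ σ : Equiv.Perm L,
        faceMap (⟨k, by omega⟩ : Fin (n + 2)) ρ =
          (extendPerm (n + 1) σ)⁻¹ * faceMap (⟨i, by omega⟩ : Fin (n + 2)) ρ *
            extendPerm (n + 1) σ := by
  classical
  intro k hik
  induction k, hik using Nat.le_induction with
  | base => exact fun _ ↦ ⟨1, by simp [extendPerm_one]⟩
  | succ k hik ih =>
    intro hkj
    obtain ⟨σ, hσ⟩ := ih (by omega)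
    obtain ⟨⟨l, hl⟩, hl_inv⟩ := hleaf k hik (by omega)
    obtain ⟨⟨l', hl'⟩, hl'_inv⟩ := hleaf (k + 1) (by omega) hkj
    rw [hl] at hl_inv
    rw [hl'] at hl'_inv
    refine ⟨σ * swap l l', ?_⟩
    have hstep : faceMap (⟨k + 1, by omega⟩ : Fin (n + 2)) ρ =
        (extendPerm (n + 1) (swap l l'))⁻¹ * faceMap (⟨k, by omega⟩ : Fin (n + 2)) ρ *
          extendPerm (n + 1) (swap l l') :=
      faceMap_succ_eq_conj_swap (⟨k, by omega⟩ : Fin (n + 1)) ρ hl hl_inv hl' hl'_inv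
    rw [hstep, hσ, extendPerm_mul, mul_inv_rev]
    group
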